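/- Let X1, ..., Xn be mutually independent random variables on a finite probability space, and let S1, S2, S3 be subsets of {1,...,n} with S1 ∩ S2 ∩ S3 = ∅. Write 𝒳i for the tuple (Xj : j ∈ Si). Then for any random variable Y, H(Y | 𝒳1) + H(Y | 𝒳2) + H(Y | 𝒳3) ≥ H(Y). -/

import Mathlib

/-!
Independence makes `S ↦ H(𝒳_S) = ∑_{i ∈ S} H(X_i)` modular, while `S ↦ H(Y, 𝒳_S)` is
submodular: `H(Y, 𝒳_A) + H(Y, 𝒳_B) - H(Y, 𝒳_{A∪B}) - H(Y, 𝒳_{A∩B}) = I(𝒳_A; 𝒳_B | Y, 𝒳_{A∩B}) ≥ 0`.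
Subtracting, `H(Y | 𝒳_{A∩B}) ≤ H(Y | 𝒳_A) + H(Y | 𝒳_B) - H(Y | 𝒳_{A∪B}) ≤ H(Y | 𝒳_A) + H(Y | 𝒳_B)`.
Applying this to `(S1, S2)` and then to `(S1 ∩ S2, S3)` bounds `H(Y | 𝒳_∅) = H(Y)`.
-/

open Finset

/-- Probability mass of the event `X = a` under weights `p`. -/
noncomputable def pmass {Ω α : Type} [Fintype Ω] [DecidableEq α]
    (p : Ω → ℝ) (X : Ω → α) (a : α) : ℝ :=
  ∑ ω, if X ω = a then p ω else 0

/-- Shannon entropy (base 2) of a random variable `X` on a finite space. -/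
noncomputable def ent {Ω α : Type} [Fintype Ω] [Fintype α] [DecidableEq α]
    (p : Ω → ℝ) (X : Ω → α) : ℝ :=
  ∑ a, -(pmass p X a * Real.logb 2 (pmass p X a))

/-- Conditional Shannon entropy `H(X|Y) = H(X,Y) - H(Y)`. -/
noncomputable def condEnt {Ω α β : Type} [Fintype Ω] [Fintype α] [Fintype β]
    [DecidableEq α] [DecidableEq β] (p : Ω → ℝ) (X : Ω → α) (Y : Ω → β) : ℝ :=
  ent p (fun ω => (X ω, Y ω)) - ent p Y

/-- Conditional mutual information `I(X;Y|W) = H(X|W) + H(Y|W) - H(X,Y|W)`. -/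
noncomputable def condMI {Ω α β γ : Type} [Fintype Ω] [Fintype α] [Fintype β] [Fintype γ]
    [DecidableEq α] [DecidableEq β] [DecidableEq γ]
    (p : Ω → ℝ) (X : Ω → α) (Y : Ω → β) (W : Ω → γ) : ℝ :=
  condEnt p X W + condEnt p Y W - condEnt p (fun ω => (X ω, Y ω)) W

/-- Mutual independence of a finite family of random variables:
the joint pmf factorizes as the product of the marginals. -/
def MutIndep {Ω α : Type} {n : ℕ} [Fintype Ω] [DecidableEq α]
    (p : Ω → ℝ) (X : Fin n → Ω → α) : Prop :=
  ∀ a : Fin n → α,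
    pmass p (fun ω => fun i => X i ω) a = ∏ i, pmass p (X i) (a i)

section Entropy

variable {Ω α β γ : Type} [Fintype Ω] (p : Ω → ℝ)

lemma pmass_nonneg [DecidableEq α] (hp0 : ∀ ω, 0 ≤ p ω) (X : Ω → α) (a : α) :
    0 ≤ pmass p X a :=
  sum_nonneg fun ω _ => by split <;> simp [hp0 ω]

lemma sum_pmass [Fintype α] [DecidableEq α] (X : Ω → α) : ∑ a, pmass p X a = ∑ ω, p ω := by
  unfold pmass
  rw [sum_comm]
  simp

lemma pmass_le_pmass_comp [DecidableEq α] [DecidableEq β] (hp0 : ∀ ω, 0 ≤ p ω) (X : Ω → α)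
    (f : α → β) (a : α) : pmass p X a ≤ pmass p (fun ω => f (X ω)) (f a) :=
  sum_le_sum fun ω _ => by
    by_cases h : X ω = a
    · simp [h]
    · simp only [h, if_false]; split <;> simp [hp0 ω]

lemma pmass_comp [Fintype α] [DecidableEq α] [DecidableEq β] (X : Ω → α) (f : α → β) (b : β) :
    pmass p (fun ω => f (X ω)) b = ∑ a with f a = b, pmass p X a := by
  unfold pmass
  rw [sum_comm]
  refine sum_congr rfl fun ω _ => ?_
  rw [sum_ite_eq]
  simp

lemma pmass_comp_of_injective [Fintype α] [DecidableEq α] [DecidableEq β] (X : Ω → α)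
    {f : α → β} (hf : f.Injective) (a : α) :
    pmass p (fun ω => f (X ω)) (f a) = pmass p X a := by
  simp only [pmass, hf.eq_iff]

lemma pmass_eq_sum_pmass_prod [Fintype α] [DecidableEq α] [DecidableEq β] (X : Ω → α)
    (Y : Ω → β) (b : β) : pmass p Y b = ∑ a, pmass p (fun ω => (X ω, Y ω)) (a, b) := by
  unfold pmass
  rw [sum_comm]
  refine sum_congr rfl fun ω _ => ?_
  simp [Prod.ext_iff, ite_and]

lemma ent_comp_eq_sum [Fintype α] [DecidableEq α] [Fintype β] [DecidableEq β] (X : Ω → α)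
    (f : α → β) :
    ent p (fun ω => f (X ω))
      = ∑ a, -(pmass p X a * Real.logb 2 (pmass p (fun ω => f (X ω)) (f a))) := by
  rw [ent, ← sum_fiberwise univ f]
  refine sum_congr rfl fun b _ => ?_
  rw [sum_congr rfl fun a ha => by rw [(mem_filter.1 ha).2], sum_neg_distrib, ← sum_mul,
    ← pmass_comp]

lemma ent_comp_of_injective [Fintype α] [DecidableEq α] [Fintype β] [DecidableEq β]
    (X : Ω → α) {f : α → β} (hf : f.Injective) : ent p (fun ω => f (X ω)) = ent p X := by
  rw [ent_comp_eq_sum]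
  simp only [pmass_comp_of_injective p X hf]
  rfl

lemma condEnt_of_unique [Fintype β] [DecidableEq β] [Fintype γ] [DecidableEq γ] [Unique γ]
    (hp1 : ∑ ω, p ω = 1) (Y : Ω → β) (W : Ω → γ) : condEnt p Y W = ent p Y := by
  obtain rfl : W = fun _ => default := funext fun _ => Subsingleton.elim _ _
  have hW : ent p (fun _ => (default : γ)) = 0 := by simp [ent, pmass, hp1]
  have hYW : ent p (fun ω => (Y ω, (default : γ))) = ent p Y :=
    ent_comp_of_injective p Y (f := fun b => (b, (default : γ))) fun _ _ h => congrArg Prod.fst h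
  rw [condEnt, hW, hYW, sub_zero]

lemma sum_mul_logb_div_nonpos {ι : Type} [Fintype ι] {b : ℝ} (hb : 1 < b) (t q : ι → ℝ)
    (ht : ∀ i, 0 ≤ t i) (hq : ∀ i, 0 ≤ q i) (hsupp : ∀ i, t i ≠ 0 → q i ≠ 0)
    (hsum : ∑ i, q i ≤ ∑ i, t i) : ∑ i, t i * Real.logb b (q i / t i) ≤ 0 := by
  have hlogb : 0 < Real.log b := Real.log_pos hb
  have hterm : ∀ i, t i * Real.log (q i / t i) ≤ q i - t i := fun i => by
    rcases (ht i).eq_or_lt with h0 | hpos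
    · simp [← h0, hq i]
    · have hqi : 0 < q i := (hq i).lt_of_ne' (hsupp i hpos.ne')
      have := Real.log_le_sub_one_of_pos (div_pos hqi hpos)
      calc t i * Real.log (q i / t i) ≤ t i * (q i / t i - 1) := by gcongr
        _ = q i - t i := by field_simp
  calc ∑ i, t i * Real.logb b (q i / t i)
      = (∑ i, t i * Real.log (q i / t i)) / Real.log b := by
        simp only [Real.logb, sum_div, mul_div_assoc]
    _ ≤ (∑ i, (q i - t i)) / Real.log b := by gcongr with i; exact hterm i
    _ ≤ 0 := div_nonpos_of_nonpos_of_nonneg (by simpa [sum_sub_distrib]) hlogb.le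

lemma condMI_nonneg [Fintype α] [DecidableEq α] [Fintype β] [DecidableEq β] [Fintype γ]
    [DecidableEq γ] (hp0 : ∀ ω, 0 ≤ p ω) (X : Ω → α) (Y : Ω → β) (W : Ω → γ) :
    0 ≤ condMI p X Y W := by
  set Z : Ω → (α × β) × γ := fun ω => ((X ω, Y ω), W ω)
  set T : (α × β) × γ → ℝ := pmass p Z
  set A : (α × β) × γ → ℝ := fun z => pmass p (fun ω => (X ω, W ω)) (z.1.1, z.2)
  set B : (α × β) × γ → ℝ := fun z => pmass p (fun ω => (Y ω, W ω)) (z.1.2, z.2)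
  set C : (α × β) × γ → ℝ := fun z => pmass p W z.2
  have hT : ∀ z, 0 ≤ T z := pmass_nonneg p hp0 Z
  have hTA : ∀ z, T z ≤ A z := pmass_le_pmass_comp p hp0 Z fun z => (z.1.1, z.2)
  have hTB : ∀ z, T z ≤ B z := pmass_le_pmass_comp p hp0 Z fun z => (z.1.2, z.2)
  have hTC : ∀ z, T z ≤ C z := pmass_le_pmass_comp p hp0 Z fun z => z.2
  have hterm : ∀ z, T z * Real.logb 2 (A z * B z / C z / T z) = T z * Real.logb 2 (A z)
      + T z * Real.logb 2 (B z) - T z * Real.logb 2 (C z) - T z * Real.logb 2 (T z) := by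
    intro z
    rcases (hT z).eq_or_lt with h0 | hpos
    · simp [← h0]
    · have hA := hpos.trans_le (hTA z)
      have hB := hpos.trans_le (hTB z)
      have hC := hpos.trans_le (hTC z)
      rw [Real.logb_div (div_pos (mul_pos hA hB) hC).ne' hpos.ne',
        Real.logb_div (mul_pos hA hB).ne' hC.ne', Real.logb_mul hA.ne' hB.ne']
      ring
  -- `A B / C` is the law under which the pair is conditionally independent given `W`.
  have hMI : condMI p X Y W = -∑ z, T z * Real.logb 2 (A z * B z / C z / T z) := by
    have eA : ent p (fun ω => (X ω, W ω)) = ∑ z, -(T z * Real.logb 2 (A z)) :=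
      ent_comp_eq_sum p Z fun z => (z.1.1, z.2)
    have eB : ent p (fun ω => (Y ω, W ω)) = ∑ z, -(T z * Real.logb 2 (B z)) :=
      ent_comp_eq_sum p Z fun z => (z.1.2, z.2)
    have eC : ent p W = ∑ z, -(T z * Real.logb 2 (C z)) := ent_comp_eq_sum p Z fun z => z.2
    have eT : ent p Z = ∑ z, -(T z * Real.logb 2 (T z)) := rfl
    rw [condMI, condEnt, condEnt, condEnt, eA, eB, eC, eT]
    simp only [hterm, sum_sub_distrib, sum_add_distrib, sum_neg_distrib]
    ring
  have hsum : ∑ z, A z * B z / C z = ∑ z, T z :=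
    calc ∑ z, A z * B z / C z
        = ∑ w, ∑ x, ∑ y, pmass p (fun ω => (X ω, W ω)) (x, w)
            * pmass p (fun ω => (Y ω, W ω)) (y, w) / pmass p W w := by
          rw [Fintype.sum_prod_type_right]
          simp only [Fintype.sum_prod_type]
          rfl
      _ = ∑ w, pmass p W w * pmass p W w / pmass p W w := by
          simp only [← sum_div, ← sum_mul_sum, ← pmass_eq_sum_pmass_prod]
      _ = ∑ z, T z := by simp only [mul_self_div_self, T, sum_pmass]
  rw [hMI, neg_nonneg]
  refine sum_mul_logb_div_nonpos one_lt_two T (fun z => A z * B z / C z) hT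
    (fun z => div_nonneg (mul_nonneg (pmass_nonneg p hp0 _ _) (pmass_nonneg p hp0 _ _))
      (pmass_nonneg p hp0 _ _)) (fun z hz => ?_) hsum.le
  have hpos := (hT z).lt_of_ne' hz
  exact (div_pos (mul_pos (hpos.trans_le (hTA z)) (hpos.trans_le (hTB z)))
    (hpos.trans_le (hTC z))).ne'

lemma condEnt_nonneg [Fintype α] [DecidableEq α] [Fintype γ] [DecidableEq γ]
    (hp0 : ∀ ω, 0 ≤ p ω) (X : Ω → α) (W : Ω → γ) : 0 ≤ condEnt p X W := by
  have hdiag : ent p (fun ω => ((X ω, X ω), W ω)) = ent p (fun ω => (X ω, W ω)) :=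
    ent_comp_of_injective p (fun ω => (X ω, W ω)) (f := fun z : α × γ => ((z.1, z.1), z.2))
      fun _ _ h => Prod.ext (congrArg (·.1.1) h) (congrArg (·.2) h)
  have h := condMI_nonneg p hp0 X X W
  simp only [condMI, condEnt, hdiag] at h
  rw [condEnt]
  linarith

lemma ent_eq_sum_ent_of_pmass_eq_prod {ι : Type} [Fintype ι] [DecidableEq ι] [Fintype α] [DecidableEq α]
    (Z : Ω → ι → α) (hZ : ∀ a, pmass p Z a = ∏ i, pmass p (fun ω => Z ω i) (a i)) :
    ent p Z = ∑ i, ent p (fun ω => Z ω i) := by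
  have hcoord : ∀ i, ent p (fun ω => Z ω i)
      = ∑ a, -(pmass p Z a * Real.logb 2 (pmass p (fun ω => Z ω i) (a i))) :=
    fun i => ent_comp_eq_sum p Z fun a => a i
  rw [sum_congr rfl fun i _ => hcoord i, sum_comm, ent]
  refine sum_congr rfl fun a _ => ?_
  rw [sum_neg_distrib, ← mul_sum]
  by_cases h : pmass p Z a = 0
  · simp [h]
  · rw [← Real.logb_prod _ _ fun i _ hi => h ((hZ a).trans (prod_eq_zero (mem_univ i) hi)),
      ← hZ a]

end Entropy

lemma Finset.restrict₂_union_injective {ι α : Type} [DecidableEq ι] {A B : Finset ι} :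
    Function.Injective fun a : ↥(A ∪ B) → α =>
      (restrict₂ (π := fun _ => α) subset_union_left a,
        restrict₂ (π := fun _ => α) subset_union_right a) := by
  intro a a' h
  funext ⟨j, hj⟩
  rcases mem_union.1 hj with hA | hB
  · exact congrFun (congrArg Prod.fst h) ⟨j, hA⟩
  · exact congrFun (congrArg Prod.snd h) ⟨j, hB⟩

section Subtuple

variable {Ω α β : Type} {n : ℕ} [Fintype Ω] [Fintype α] [DecidableEq α] (p : Ω → ℝ)
  {X : Fin n → Ω → α}

lemma MutIndep.pmass_subtuple (hX : MutIndep p X) (hp1 : ∑ ω, p ω = 1) (S : Finset (Fin n))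
    (a : ↥S → α) : pmass p (fun ω (j : ↥S) => X j ω) a = ∏ j : ↥S, pmass p (X j) (a j) := by
  set t : Fin n → Finset α := fun i => if h : i ∈ S then {a ⟨i, h⟩} else univ
  calc pmass p (fun ω (j : ↥S) => X j ω) a
      = ∑ b with (fun j : ↥S => b j) = a, pmass p (fun ω i => X i ω) b :=
        pmass_comp p (fun ω i => X i ω) (fun b (j : ↥S) => b j) a
    _ = ∑ b ∈ Fintype.piFinset t, ∏ i, pmass p (X i) (b i) := by
        refine sum_congr ?_ fun b _ => hX b
        ext b
        simp only [mem_filter, mem_univ, true_and, Fintype.mem_piFinset, funext_iff,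
          Subtype.forall]
        refine forall_congr' fun i => ?_
        by_cases h : i ∈ S <;> simp [t, h]
    _ = ∏ i, ∑ x ∈ t i, pmass p (X i) x := (prod_univ_sum t _).symm
    _ = ∏ i, if h : i ∈ S then pmass p (X i) (a ⟨i, h⟩) else 1 :=
        prod_congr rfl fun i _ => by by_cases h : i ∈ S <;> simp [t, h, sum_pmass, hp1]
    _ = ∏ j : ↥S, pmass p (X j) (a j) := by
        rw [← prod_attach_eq_prod_dite S fun j => pmass p (X j) (a j), univ_eq_attach]

lemma MutIndep.ent_subtuple (hX : MutIndep p X) (hp1 : ∑ ω, p ω = 1) (S : Finset (Fin n)) :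
    ent p (fun ω (j : ↥S) => X j ω) = ∑ i ∈ S, ent p (X i) := by
  rw [ent_eq_sum_ent_of_pmass_eq_prod p _ (hX.pmass_subtuple p hp1 S)]
  exact sum_coe_sort S fun i => ent p (X i)

lemma MutIndep.condEnt_subtuple_inter_le [Fintype β] [DecidableEq β] (hX : MutIndep p X)
    (hp0 : ∀ ω, 0 ≤ p ω) (hp1 : ∑ ω, p ω = 1) (Y : Ω → β) (A B : Finset (Fin n)) :
    condEnt p Y (fun ω (j : ↥(A ∩ B)) => X j ω)
      ≤ condEnt p Y (fun ω (j : ↥A) => X j ω) + condEnt p Y (fun ω (j : ↥B) => X j ω) := by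
  set XA := fun ω (j : ↥A) => X j ω
  set XB := fun ω (j : ↥B) => X j ω
  set XI := fun ω (j : ↥(A ∩ B)) => X j ω
  set XU := fun ω (j : ↥(A ∪ B)) => X j ω
  have hA : ent p (fun ω => (XA ω, (Y ω, XI ω))) = ent p (fun ω => (Y ω, XA ω)) :=
    ent_comp_of_injective p (fun ω => (Y ω, XA ω))
      (f := fun z => (z.2, (z.1, restrict₂ (π := fun _ => α) inter_subset_left z.2)))
      fun _ _ h => Prod.ext (congrArg (·.2.1) h) (congrArg (·.1) h)
  have hB : ent p (fun ω => (XB ω, (Y ω, XI ω))) = ent p (fun ω => (Y ω, XB ω)) :=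
    ent_comp_of_injective p (fun ω => (Y ω, XB ω))
      (f := fun z => (z.2, (z.1, restrict₂ (π := fun _ => α) inter_subset_right z.2)))
      fun _ _ h => Prod.ext (congrArg (·.2.1) h) (congrArg (·.1) h)
  have hU : ent p (fun ω => ((XA ω, XB ω), (Y ω, XI ω))) = ent p (fun ω => (Y ω, XU ω)) :=
    ent_comp_of_injective p (fun ω => (Y ω, XU ω))
      (f := fun z => ((restrict₂ (π := fun _ => α) subset_union_left z.2,
        restrict₂ (π := fun _ => α) subset_union_right z.2),
        (z.1, restrict₂ (π := fun _ => α) (inter_subset_left.trans subset_union_left) z.2)))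
      fun _ _ h => Prod.ext (congrArg (·.2.1) h) (restrict₂_union_injective (congrArg (·.1) h))
  have hmod : ent p XA + ent p XB = ent p XU + ent p XI := by
    rw [hX.ent_subtuple p hp1, hX.ent_subtuple p hp1, hX.ent_subtuple p hp1,
      hX.ent_subtuple p hp1, sum_union_inter]
  have hMI := condMI_nonneg p hp0 XA XB fun ω => (Y ω, XI ω)
  have hYU := condEnt_nonneg p hp0 Y XU
  simp only [condMI, condEnt, hA, hB, hU] at hMI hYU ⊢
  linarith

end Subtuple

/-- if `X1,…,Xn` are mutually independent and `S1 ∩ S2 ∩ S3 = ∅`,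
then `H(Y|𝒳1) + H(Y|𝒳2) + H(Y|𝒳3) ≥ H(Y)` where `𝒳i = (Xj : j ∈ Si)`. -/
theorem stmt_5 {Ω α β : Type} {n : ℕ} [Fintype Ω] [Fintype α] [Fintype β]
    [DecidableEq α] [DecidableEq β]
    (p : Ω → ℝ) (hp0 : ∀ ω, 0 ≤ p ω) (hp1 : ∑ ω, p ω = 1)
    (X : Fin n → Ω → α) (hindep : MutIndep p X)
    (S1 S2 S3 : Finset (Fin n)) (hS : S1 ∩ S2 ∩ S3 = ∅)
    (Y : Ω → β) :
    ent p Y ≤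
      condEnt p Y (fun ω => fun j : ↥S1 => X j ω)
        + condEnt p Y (fun ω => fun j : ↥S2 => X j ω)
        + condEnt p Y (fun ω => fun j : ↥S3 => X j ω) := by
  have h12 := hindep.condEnt_subtuple_inter_le p hp0 hp1 Y S1 S2
  have h123 := hindep.condEnt_subtuple_inter_le p hp0 hp1 Y (S1 ∩ S2) S3
  have : IsEmpty ↥(S1 ∩ S2 ∩ S3) := by rw [hS]; infer_instance
  rw [condEnt_of_unique p hp1] at h123
  linarith
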